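/- arXiv:1603.02807 — 11 statements merged into one kernel-verified Lean document; each statement's English description precedes it below -/
import Mathlib

section
/- Let A be an (N,v,t)-suitable array, let α be the leftmost (first) symbol of some row of A, and let r′ be a different row of A. Then the array B obtained from A by deleting the occurrence of α in row r′ and appending α at the rightmost (last) position of row r′ is again an (N,v,t)-suitable array. -/
/-!
Moving `α` to the end of row `r'` keeps the relative order of all other symbols in that row,
so every witness row for a symbol `σ ≠ α` is still a witness. For `σ = α` the row `r`, which
starts with `α` and is unchanged, is a witness for every set not containing `α`.
-/

/-- An `(N,v,t)`-suitable array: an `N × v` array, each of whose rows is a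
permutation of `{1,…,v}` (modelled as `Fin v`, with `A i p` the symbol in
position `p` of row `i`), such that every symbol precedes every subset of
`t-1` others in at least one row. -/
def IsSuitableArray (N v t : ℕ) (A : Fin N → Equiv.Perm (Fin v)) : Prop :=
  ∀ σ : Fin v, ∀ S : Finset (Fin v), σ ∉ S → S.card = t - 1 →
    ∃ i : Fin N, ∀ τ ∈ S, ((A i).symm σ : ℕ) < ((A i).symm τ : ℕ)

theorem IsSuitableArray.of_forall_lt_imp_lt {N v t : ℕ} {A B : Fin N → Equiv.Perm (Fin v)}
    {α : Fin v} (hA : IsSuitableArray N v t A) (r : Fin N)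
    (hr : ∀ τ, τ ≠ α → ((B r).symm α : ℕ) < (B r).symm τ)
    (hB : ∀ i σ τ, σ ≠ α → ((A i).symm σ : ℕ) < (A i).symm τ → ((B i).symm σ : ℕ) < (B i).symm τ) :
    IsSuitableArray N v t B := by
  intro σ S hσS hcard
  by_cases hσ : σ = α
  · subst hσ
    exact ⟨r, fun τ hτ => hr τ (ne_of_mem_of_not_mem hτ hσS)⟩
  · obtain ⟨i, hi⟩ := hA σ S hσS hcard
    exact ⟨i, fun τ hτ => hB i σ τ hσ (hi τ hτ)⟩

namespace Equiv.Perm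

variable {v : ℕ} {p q : Equiv.Perm (Fin v)} {α : Fin v}

theorem symm_val_lt_of_apply_zero (hv : 0 < v) (hα : p ⟨0, hv⟩ = α) {τ : Fin v} (hτ : τ ≠ α) :
    (p.symm α : ℕ) < p.symm τ := by
  rw [← hα, symm_apply_apply]
  refine Nat.pos_of_ne_zero fun h0 => hτ ?_
  rw [← hα, ← Fin.ext (a := p.symm τ) (b := ⟨0, hv⟩) h0, apply_symm_apply]

/-! `q` is `p` with the symbol `α` deleted and appended at the end. -/

theorem symm_val_eq_of_lt_symm (hbefore : ∀ k : Fin v, (k : ℕ) < p.symm α → q k = p k)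
    {x : Fin v} (hx : (p.symm x : ℕ) < p.symm α) : (q.symm x : ℕ) = p.symm x := by
  rw [(q.symm_apply_eq).2 ((hbefore _ hx).trans (p.apply_symm_apply x)).symm]

theorem symm_val_add_one_eq_of_symm_lt
    (hafter : ∀ k : Fin v, ∀ h : (k : ℕ) + 1 < v, (p.symm α : ℕ) ≤ k → q k = p ⟨k + 1, h⟩)
    {x : Fin v} (hx : (p.symm α : ℕ) < p.symm x) : (q.symm x : ℕ) + 1 = p.symm x := by
  have hxv := (p.symm x).isLt
  have hk : q ⟨p.symm x - 1, by omega⟩ = x := by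
    rw [hafter _ (by dsimp only; omega) (by dsimp only; omega)]
    conv_rhs => rw [← p.apply_symm_apply x]
    congr 1
    ext
    dsimp only
    omega
  rw [(q.symm_apply_eq).2 hk.symm]
  dsimp only
  omega

theorem symm_val_of_move_to_end (hbefore : ∀ k : Fin v, (k : ℕ) < p.symm α → q k = p k)
    (hafter : ∀ k : Fin v, ∀ h : (k : ℕ) + 1 < v, (p.symm α : ℕ) ≤ k → q k = p ⟨k + 1, h⟩)
    {x : Fin v} (hx : x ≠ α) :
    (q.symm x : ℕ) = if (p.symm x : ℕ) < p.symm α then (p.symm x : ℕ) else (p.symm x : ℕ) - 1 := by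
  have hne : (p.symm x : ℕ) ≠ p.symm α := fun h => hx (p.symm.injective (Fin.ext h))
  rcases Nat.lt_or_gt_of_ne hne with hlt | hgt
  · rw [if_pos hlt, symm_val_eq_of_lt_symm hbefore hlt]
  · rw [if_neg hgt.not_gt]
    have := symm_val_add_one_eq_of_symm_lt hafter hgt
    omega

theorem symm_val_lt_symm_val_of_move_to_end
    (hbefore : ∀ k : Fin v, (k : ℕ) < p.symm α → q k = p k)
    (hafter : ∀ k : Fin v, ∀ h : (k : ℕ) + 1 < v, (p.symm α : ℕ) ≤ k → q k = p ⟨k + 1, h⟩)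
    (hv : 0 < v) (hlast : q ⟨v - 1, by omega⟩ = α)
    {σ τ : Fin v} (hσ : σ ≠ α) (hστ : (p.symm σ : ℕ) < p.symm τ) :
    (q.symm σ : ℕ) < q.symm τ := by
  by_cases hτ : τ = α
  · subst hτ
    have hqα : (q.symm τ : ℕ) = v - 1 := by rw [(q.symm_apply_eq).2 hlast.symm]
    have hqσ : (q.symm σ : ℕ) ≠ q.symm τ := fun h => hσ (q.symm.injective (Fin.ext h))
    have := (q.symm σ).isLt
    omega
  have hσα : (p.symm σ : ℕ) ≠ p.symm α := fun h => hσ (p.symm.injective (Fin.ext h))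
  have hτα : (p.symm τ : ℕ) ≠ p.symm α := fun h => hτ (p.symm.injective (Fin.ext h))
  rw [symm_val_of_move_to_end hbefore hafter hσ, symm_val_of_move_to_end hbefore hafter hτ]
  split_ifs <;> omega

end Equiv.Perm

/-- Moving an occurrence of `α` (the leftmost symbol of row `r`) from a
different row `r'` to the rightmost position of row `r'` preserves
suitability. -/
theorem suitable_array_of_move_symbol_to_end
    (N v t : ℕ) (hv : 0 < v)
    (A : Fin N → Equiv.Perm (Fin v)) (hA : IsSuitableArray N v t A)
    (r r' : Fin N) (hrr' : r' ≠ r) (α : Fin v)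
    (hα : A r ⟨0, hv⟩ = α)
    (B : Fin N → Equiv.Perm (Fin v))
    (hB₁ : ∀ i : Fin N, i ≠ r' → B i = A i)
    (hB₂ : ∀ q : Fin v, (q : ℕ) < ((A r').symm α : ℕ) → B r' q = A r' q)
    (hB₃ : ∀ q : Fin v, ∀ h : (q : ℕ) + 1 < v,
      ((A r').symm α : ℕ) ≤ (q : ℕ) → B r' q = A r' ⟨(q : ℕ) + 1, h⟩)
    (hB₄ : B r' ⟨v - 1, by omega⟩ = α) :
    IsSuitableArray N v t B := by
  refine hA.of_forall_lt_imp_lt (α := α) r (fun τ hτ => ?_) (fun i σ τ hσ hστ => ?_)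
  · rw [hB₁ r hrr'.symm]
    exact Equiv.Perm.symm_val_lt_of_apply_zero hv hα hτ
  · by_cases hi : i = r'
    · subst hi
      exact Equiv.Perm.symm_val_lt_symm_val_of_move_to_end hB₂ hB₃ hv hB₄ hσ hστ
    · rwa [hB₁ i hi]
end

section
/- Let C be an N×v array, each of whose rows is a permutation of [v]. Then C is an (N,v,t)-suitable core if and only if for every symbol σ ∈ [v] and every subset T ⊆ [v]∖{σ}, the number of rows of C in which every symbol occurring before σ belongs to T is at least t+1−v+|T|. -/
/-- An `(N,v,t)`-suitable core: an `N × v` array, each of whose rows is a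
permutation of `{1,…,v}` (modelled as `Fin v`, with `C i p` the symbol in
position `p` of row `i`), such that for every `s` with `0 ≤ s ≤ t-1`, every
symbol precedes every subset of `s` other symbols in at least `t - s` rows. -/
def IsSuitableCore (N v t : ℕ) (C : Fin N → Equiv.Perm (Fin v)) : Prop :=
  ∀ s : ℕ, s < t → ∀ σ : Fin v, ∀ S : Finset (Fin v), σ ∉ S → S.card = s →
    t - s ≤ (Finset.univ.filter
      (fun i : Fin N => ∀ τ ∈ S, ((C i).symm σ : ℕ) < ((C i).symm τ : ℕ))).card

lemma key_filter_eq (N v : ℕ) (C : Fin N → Equiv.Perm (Fin v))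
    (σ : Fin v) (S : Finset (Fin v)) (hσS : σ ∉ S) :
    Finset.univ.filter
      (fun i : Fin N => ∀ τ ∈ S, ((C i).symm σ : ℕ) < ((C i).symm τ : ℕ))
    = Finset.univ.filter (fun i : Fin N =>
        ∀ τ : Fin v, ((C i).symm τ : ℕ) < ((C i).symm σ : ℕ) → τ ∈ (insert σ S)ᶜ) := by
  apply Finset.filter_congr
  intro i _
  constructor
  · intro h τ hlt
    simp only [Finset.mem_compl, Finset.mem_insert, not_or]
    constructor
    · rintro rfl; exact lt_irrefl _ hlt
    · intro hτS; exact absurd (h τ hτS) (not_lt.2 hlt.le)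
  · intro h τ hτS
    rcases lt_trichotomy (((C i).symm τ : ℕ)) (((C i).symm σ : ℕ)) with hlt | heq | hgt
    · have := h τ hlt
      simp only [Finset.mem_compl, Finset.mem_insert, not_or] at this
      exact absurd hτS this.2
    · exfalso
      have h1 : (C i).symm τ = (C i).symm σ := Fin.ext heq
      have h2 : τ = σ := (C i).symm.injective h1
      exact hσS (h2 ▸ hτS)
    · exact hgt

/-- `C` is an `(N,v,t)`-suitable core if and only if for every symbol `σ` and
every set `T` of other symbols, the number of rows in which every symbol
occurring before `σ` belongs to `T` is at least `t + 1 - v + |T|`. -/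
theorem isSuitableCore_iff_pre_bound
    (N v t : ℕ) (hN : 0 < N) (hv : 0 < v) (ht : 0 < t)
    (C : Fin N → Equiv.Perm (Fin v)) :
    IsSuitableCore N v t C ↔
      ∀ σ : Fin v, ∀ T : Finset (Fin v), σ ∉ T →
        (t : ℤ) + 1 - v + T.card ≤
          ((Finset.univ.filter (fun i : Fin N =>
            ∀ τ : Fin v, ((C i).symm τ : ℕ) < ((C i).symm σ : ℕ) → τ ∈ T)).card : ℤ) := by
  constructor
  · intro h σ T hσT
    set S : Finset (Fin v) := (insert σ T)ᶜ with hS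
    have hσS : σ ∉ S := by simp [hS]
    have hTc : (insert σ S)ᶜ = T := by
      ext τ
      by_cases hτ : τ = σ
      · subst hτ; simp [hσT]
      · simp [hS, hτ]
    have hle : T.card + 1 ≤ v := by
      have := Finset.card_le_univ (insert σ T)
      rwa [Finset.card_insert_of_notMem hσT, Fintype.card_fin] at this
    have hcardS : S.card = v - (T.card + 1) := by
      rw [hS, Finset.card_compl, Finset.card_insert_of_notMem hσT, Fintype.card_fin]
    by_cases hst : S.card < t
    · have hb := h S.card hst σ S hσS rfl
      rw [key_filter_eq N v C σ S hσS, hTc] at hb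
      have : (↑(t - S.card) : ℤ) ≤
          ((Finset.univ.filter (fun i : Fin N =>
            ∀ τ : Fin v, ((C i).symm τ : ℕ) < ((C i).symm σ : ℕ) → τ ∈ T)).card : ℤ) :=
        Int.ofNat_le.mpr hb
      omega
    · have hpos : (0 : ℤ) ≤
          ((Finset.univ.filter (fun i : Fin N =>
            ∀ τ : Fin v, ((C i).symm τ : ℕ) < ((C i).symm σ : ℕ) → τ ∈ T)).card : ℤ) :=
        Int.ofNat_nonneg _
      omega
  · intro h s hst σ S hσS hcard
    set T : Finset (Fin v) := (insert σ S)ᶜ with hT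
    have hσT : σ ∉ T := by simp [hT]
    have hle : s + 1 ≤ v := by
      have := Finset.card_le_univ (insert σ S)
      rwa [Finset.card_insert_of_notMem hσS, Fintype.card_fin, hcard] at this
    have hcardT : T.card = v - (s + 1) := by
      rw [hT, Finset.card_compl, Finset.card_insert_of_notMem hσS, Fintype.card_fin, hcard]
    have hb := h σ T hσT
    rw [key_filter_eq N v C σ S hσS, ← hT]
    rw [hcardT] at hb
    omega
end

section
/- Suppose there exists an (N,v,t)-suitable core. Then N ≥ i(t+1−i) for every integer i with 1 ≤ i ≤ min(v,t). -/
/-- If an `(N,v,t)`-suitable core exists, then `N ≥ i(t+1-i)` for every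
`i` with `1 ≤ i ≤ min(v,t)`. -/
theorem le_of_exists_suitableCore
    (N v t : ℕ) (hN : 0 < N) (hv : 0 < v) (ht : 0 < t)
    (hC : ∃ C : Fin N → Equiv.Perm (Fin v), IsSuitableCore N v t C) :
    ∀ i : ℕ, 1 ≤ i → i ≤ min v t → i * (t + 1 - i) ≤ N := by
  obtain ⟨C, hC⟩ := hC
  intro i hi him
  have hiv : i ≤ v := le_trans him (min_le_left _ _)
  have hit : i ≤ t := le_trans him (min_le_right _ _)
  set A : Finset (Fin v) :=
    Finset.attachFin (Finset.range i)
      (fun m hm => lt_of_lt_of_le (Finset.mem_range.mp hm) hiv) with hA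
  have hAcard : A.card = i := by
    rw [hA, Finset.card_attachFin, Finset.card_range]
  set F : Fin v → Finset (Fin N) := fun σ => Finset.univ.filter
    (fun r => ∀ τ ∈ A.erase σ, ((C r).symm σ : ℕ) < ((C r).symm τ : ℕ)) with hFdef
  have hF : ∀ σ ∈ A, t + 1 - i ≤ (F σ).card := by
    intro σ hσ
    have h := hC (i - 1) (by omega) σ (A.erase σ) (Finset.notMem_erase _ _)
      (by rw [Finset.card_erase_of_mem hσ, hAcard])
    have : t - (i - 1) ≤ (F σ).card := h
    omega
  have hdisj : ∀ σ ∈ A, ∀ σ' ∈ A, σ ≠ σ' → Disjoint (F σ) (F σ') := by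
    intro σ hσ σ' hσ' hne
    refine Finset.disjoint_left.mpr ?_
    intro r hr hr'
    simp only [hFdef, Finset.mem_filter] at hr hr'
    have h1 := hr.2 σ' (Finset.mem_erase.mpr ⟨hne.symm, hσ'⟩)
    have h2 := hr'.2 σ (Finset.mem_erase.mpr ⟨hne, hσ⟩)
    omega
  calc i * (t + 1 - i) = ∑ _σ ∈ A, (t + 1 - i) := by
        rw [Finset.sum_const, hAcard, smul_eq_mul]
    _ ≤ ∑ σ ∈ A, (F σ).card := Finset.sum_le_sum hF
    _ = (A.biUnion F).card := (Finset.card_biUnion hdisj).symm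
    _ ≤ (Finset.univ : Finset (Fin N)).card := Finset.card_le_univ _
    _ = N := by simp
end

section
/- Let t, N be positive integers and let k ≥ 1 be an integer satisfying k(t+1−k) ≤ N < (k+1)(t−k). Then there exists an (N,k,t)-suitable core, and there does not exist an (N,k+1,t)-suitable core. (Equivalently, SCN(t,N) = k, where SCN(t,N) denotes the largest v for which an (N,v,t)-suitable core exists.) -/
open Finset Fin.NatCast

theorem isSuitableCore_of_firsts_of_seconds {N v t r : ℕ} (C : Fin N → Equiv.Perm (Fin v))
    (hfirst : ∀ σ, r ≤ #{i | ((C i).symm σ : ℕ) = 0})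
    (hsecond : ∀ σ τ, τ ≠ σ → ∃ i, ((C i).symm τ : ℕ) = 0 ∧ ((C i).symm σ : ℕ) = 1)
    (ht : t + 1 ≤ r + v) : IsSuitableCore N v t C := by
  intro s _ σ S hσS hS
  set first : Fin N → Fin v := fun i => C i ⟨0, σ.pos⟩
  have first_eq {i τ} (h : ((C i).symm τ : ℕ) = 0) : first i = τ :=
    (Equiv.eq_symm_apply _).1 (Fin.ext h.symm)
  have pos_ne {i τ} (hτ : τ ∈ S) : ((C i).symm σ : ℕ) ≠ (C i).symm τ := by
    rw [Ne, Fin.val_inj, (C i).symm.injective.eq_iff]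
    rintro rfl
    exact hσS hτ
  set good : Finset (Fin N) := {i | ∀ τ ∈ S, ((C i).symm σ : ℕ) < ((C i).symm τ : ℕ)}
  set firstRows : Finset (Fin N) := {i | ((C i).symm σ : ℕ) = 0}
  set secondRows : Finset (Fin N) := {i | ((C i).symm σ : ℕ) = 1 ∧ first i ∉ S}
  have hA : firstRows ⊆ good := by
    intro i hi
    simp only [firstRows, good, mem_filter, mem_univ, true_and] at hi ⊢
    intro τ hτ
    have := pos_ne (i := i) hτ
    omega
  have hB : secondRows ⊆ good := by
    intro i hi
    simp only [secondRows, good, mem_filter, mem_univ, true_and] at hi ⊢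
    intro τ hτ
    have h0 : ((C i).symm τ : ℕ) ≠ 0 := fun h => hi.2 (first_eq h ▸ hτ)
    have := pos_ne (i := i) hτ
    omega
  have hAB : Disjoint firstRows secondRows := by
    simp +contextual [firstRows, secondRows, disjoint_filter]
  have hU : #(univ \ insert σ S) ≤ #secondRows := by
    refine card_le_card_of_surjOn first fun τ hτ => ?_
    simp only [coe_sdiff, coe_insert, Set.mem_sdiff, Set.mem_insert_iff, mem_coe, not_or] at hτ
    obtain ⟨i, hτi, hσi⟩ := hsecond σ τ hτ.2.1
    exact ⟨i, by simp [secondRows, hσi, first_eq hτi, hτ.2.2], first_eq hτi⟩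
  have hcardU : #(univ \ insert σ S) = v - 1 - s := by
    rw [card_sdiff_of_subset (subset_univ _), card_insert_of_notMem hσS, card_univ,
      Fintype.card_fin, hS]
    omega
  have hs : s + 1 ≤ v := by
    simpa [hS, card_insert_of_notMem hσS] using card_le_univ (insert σ S)
  calc t - s ≤ r + (v - 1 - s) := by omega
    _ ≤ #firstRows + #secondRows := add_le_add (hfirst σ) (hcardU ▸ hU)
    _ = #(firstRows ∪ secondRows) := (card_union_of_disjoint hAB).symm
    _ ≤ #good := card_le_card (union_subset hA hB)

theorem IsSuitableCore.succ_mul_le {N v t : ℕ} {C : Fin N → Equiv.Perm (Fin (v + 1))}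
    (hC : IsSuitableCore N (v + 1) t C) (hv : v < t) : (v + 1) * (t - v) ≤ N := by
  have hlead : ∀ σ, t - v ≤ #{i | C i 0 = σ} := by
    intro σ
    refine (hC v hv σ (univ.erase σ) (notMem_erase σ _) (by simp)).trans (card_le_card ?_)
    intro i hi
    simp only [mem_filter, mem_univ, true_and] at hi ⊢
    by_contra hne
    simpa using hi (C i 0) (mem_erase.2 ⟨hne, mem_univ _⟩)
  calc (v + 1) * (t - v) = ∑ _σ : Fin (v + 1), (t - v) := by simp
    _ ≤ ∑ σ, #{i | C i 0 = σ} := sum_le_sum fun σ _ => hlead σ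
    _ = N := by
      rw [← card_eq_sum_card_fiberwise fun i _ => mem_univ (C i 0)]
      simp

section LeadRow

variable {v : ℕ} [NeZero v]

/-- The row listing `c` first and `c + 1 + j % (v - 1)` second. -/
def leadRow (c : Fin v) (j : ℕ) : Equiv.Perm (Fin v) :=
  ((Equiv.subRight c).trans (Equiv.swap 1 ((j % (v - 1) + 1 : ℕ) : Fin v))).symm

theorem leadRow_symm_apply (c : Fin v) (j : ℕ) (y : Fin v) :
    (leadRow c j).symm y = Equiv.swap 1 ((j % (v - 1) + 1 : ℕ) : Fin v) (y - c) := rfl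

theorem leadRow_symm_self (c : Fin v) (j : ℕ) : ((leadRow c j).symm c : ℕ) = 0 := by
  obtain hv | hv : v = 1 ∨ 2 ≤ v := by have := NeZero.pos v; omega
  · have := ((leadRow c j).symm c).isLt
    omega
  · rw [leadRow_symm_apply, sub_self, Equiv.swap_apply_of_ne_of_ne]
    · rfl
    · rw [Ne, Fin.ext_iff, Fin.val_zero, Fin.val_one', Nat.mod_eq_of_lt hv]; omega
    · rw [Ne, Fin.ext_iff, Fin.val_zero, Fin.val_natCast]
      have := Nat.mod_lt j (by omega : 0 < v - 1)
      rw [Nat.mod_eq_of_lt (by omega)]; omega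

theorem leadRow_symm_of_ne {c d : Fin v} (h : d ≠ c) :
    ((leadRow c ((d - c : Fin v) - 1 : ℕ)).symm d : ℕ) = 1 := by
  have hpos : 0 < ((d - c : Fin v) : ℕ) := by
    rw [Nat.pos_iff_ne_zero, Fin.val_ne_zero_iff]; exact sub_ne_zero.2 h
  have hlt := (d - c).isLt
  have hm : ((((d - c : Fin v) - 1 : ℕ) % (v - 1) + 1 : ℕ) : Fin v) = d - c := by
    rw [Nat.mod_eq_of_lt (by omega), Nat.sub_add_cancel hpos, Fin.cast_val_eq_self]
  rw [leadRow_symm_apply, hm, Equiv.swap_apply_right, Fin.val_one', Nat.mod_eq_of_lt (by omega)]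

end LeadRow

theorem exists_isSuitableCore {N v t : ℕ} [NeZero v] (hv : v - 1 ≤ t + 1 - v)
    (hN : v * (t + 1 - v) ≤ N) : ∃ C : Fin N → Equiv.Perm (Fin v), IsSuitableCore N v t C := by
  set r := t + 1 - v
  have hrow (c : Fin v) (j : Fin r) : r * c + j < N :=
    calc r * c + j < r * (c + 1) := by rw [mul_add_one]; exact Nat.add_lt_add_left j.isLt _
      _ ≤ r * v := Nat.mul_le_mul_left r c.isLt
      _ ≤ N := by rw [mul_comm]; exact hN
  let row (c : Fin v) (j : Fin r) : Fin N := ⟨r * c + j, hrow c j⟩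
  have row_div (c j) : (row c j : ℕ) / r = c := by
    rw [Nat.mul_add_div (Nat.zero_lt_of_lt j.isLt), Nat.div_eq_of_lt j.isLt, add_zero]
  have row_mod (c j) : (row c j : ℕ) % r = j := by
    rw [Nat.mul_add_mod, Nat.mod_eq_of_lt j.isLt]
  refine ⟨fun i => leadRow ((i / r : ℕ) : Fin v) (i % r),
    isSuitableCore_of_firsts_of_seconds _ (r := r) (fun σ => ?_) (fun σ τ hτσ => ?_) (by omega)⟩
  · calc r = #(univ : Finset (Fin r)) := by simp
      _ ≤ _ := card_le_card_of_injOn (row σ)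
          (fun j _ => by simpa [row_div, row_mod] using leadRow_symm_self σ j)
          (fun j₁ _ j₂ _ h => Fin.ext (Nat.add_left_cancel (Fin.val_eq_of_eq h)))
  · have hj : ((σ - τ : Fin v) : ℕ) - 1 < r := by have := (σ - τ).isLt; omega
    refine ⟨row τ ⟨_, hj⟩, ?_, ?_⟩ <;> simp only [row_div, row_mod, Fin.cast_val_eq_self]
    · exact leadRow_symm_self τ _
    · exact leadRow_symm_of_ne hτσ.symm

theorem scn_eq_of_between_general
    (t N k : ℕ) (hk : 1 ≤ k)
    (h₁ : (k : ℤ) * ((t : ℤ) + 1 - k) ≤ (N : ℤ))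
    (h₂ : (N : ℤ) < ((k : ℤ) + 1) * ((t : ℤ) - k)) :
    (∃ C : Fin N → Equiv.Perm (Fin k), IsSuitableCore N k t C) ∧
      ¬ (∃ C : Fin N → Equiv.Perm (Fin (k + 1)), IsSuitableCore N (k + 1) t C) := by
  have hkt : k < t := by
    have : (k : ℤ) < t := by nlinarith
    exact_mod_cast this
  have h2kt : 2 * k < t := by
    have : 2 * (k : ℤ) < t := by nlinarith
    exact_mod_cast this
  have : NeZero k := ⟨by omega⟩
  refine ⟨exists_isSuitableCore (by omega) ?_, fun ⟨C, hC⟩ => ?_⟩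
  · have : ((k * (t + 1 - k) : ℕ) : ℤ) ≤ N := by
      push_cast [Nat.cast_sub (by omega : k ≤ t + 1)]
      linarith
    exact_mod_cast this
  · have : (((k + 1) * (t - k) : ℕ) : ℤ) ≤ N := by exact_mod_cast hC.succ_mul_le hkt
    push_cast [Nat.cast_sub hkt.le] at this
    linarith

/-- If `k(t+1-k) ≤ N < (k+1)(t-k)` then an `(N,k,t)`-suitable core exists but an
`(N,k+1,t)`-suitable core does not; i.e. `SCN(t,N) = k`. -/
theorem scn_eq_of_between
    (t N k : ℕ) (ht : 0 < t) (hN : 0 < N) (hk : 1 ≤ k)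
    (h₁ : (k : ℤ) * ((t : ℤ) + 1 - k) ≤ (N : ℤ))
    (h₂ : (N : ℤ) < ((k : ℤ) + 1) * ((t : ℤ) - k)) :
    (∃ C : Fin N → Equiv.Perm (Fin k), IsSuitableCore N k t C) ∧
      ¬ (∃ C : Fin N → Equiv.Perm (Fin (k + 1)), IsSuitableCore N (k + 1) t C) :=
  scn_eq_of_between_general t N k hk h₁ h₂
end

section
/- Let C be an (N,v,t)-suitable core with v ≤ t+1, let k ∈ [v] occur as the first symbol of a row of C exactly t+1−v times, and let j ∈ [v] be a symbol distinct from k. Then there is at least one row of C whose first two symbols are j followed by k. -/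
/-!
Let `S` be the set of all symbols other than `j` and `k`. Since `|S| = v - 2 ≤ t - 1`, the symbol
`k` precedes all of `S` in at least `t + 2 - v` rows, one more than the number of rows starting
with `k`. In a row where `k` precedes `S` but is not first, the only symbol that can stand before
`k` is `j`, so the row starts with `j, k`.
-/

theorem Equiv.val_eq_zero_and_val_eq_one_of_forall_lt {α : Type*} {n : ℕ} (e : α ≃ Fin n)
    {j k : α} (hk : (e k : ℕ) ≠ 0) (hlt : ∀ a, a ≠ k → a ≠ j → (e k : ℕ) < e a) :
    (e j : ℕ) = 0 ∧ (e k : ℕ) = 1 := by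
  have hbefore : ∀ p : Fin n, (p : ℕ) < e k → e.symm p = j := by
    intro p hp
    by_contra hpj
    have hpk : e.symm p ≠ k := by rintro rfl; simp at hp
    exact lt_asymm hp (by simpa using hlt _ hpk hpj)
  have hj : e j = ⟨0, by omega⟩ := by
    rw [← hbefore ⟨0, by omega⟩ (Nat.pos_of_ne_zero hk), Equiv.apply_symm_apply]
  refine ⟨congrArg Fin.val hj, ?_⟩
  by_contra hk1
  have hj' := hbefore ⟨1, by omega⟩ (show 1 < (e k : ℕ) by omega)
  rw [← hj', Equiv.apply_symm_apply, Fin.mk.injEq] at hj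
  exact one_ne_zero hj

theorem suitableCore_exists_row_start_pair_general
    (N v t : ℕ) (hvt : v ≤ t + 1)
    (C : Fin N → Equiv.Perm (Fin v)) (hC : IsSuitableCore N v t C)
    (k j : Fin v) (hjk : j ≠ k)
    (hk : (Finset.univ.filter (fun i : Fin N => ((C i).symm k : ℕ) = 0)).card = t + 1 - v) :
    ∃ i : Fin N, ((C i).symm j : ℕ) = 0 ∧ ((C i).symm k : ℕ) = 1 := by
  set S : Finset (Fin v) := {k, j}ᶜ with hS
  have hpair : ({k, j} : Finset (Fin v)).card = 2 := Finset.card_pair hjk.symm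
  have hv : 2 ≤ v := by simpa [hpair] using Finset.card_le_univ ({k, j} : Finset (Fin v))
  have hScard : S.card = v - 2 := by rw [hS, Finset.card_compl, hpair, Fintype.card_fin]
  have hprecede := hC (v - 2) (by omega) k S (by simp [hS]) hScard
  have hmore : t + 1 - v < t - (v - 2) := by omega
  obtain ⟨i, hprec_i, hfirst_i⟩ :=
    Finset.exists_mem_notMem_of_card_lt_card ((hk ▸ hmore).trans_le hprecede)
  simp only [Finset.mem_filter, Finset.mem_univ, true_and] at hprec_i hfirst_i
  exact ⟨i, (C i).symm.val_eq_zero_and_val_eq_one_of_forall_lt hfirst_i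
    fun a hak haj => hprec_i a (by simp [hS, hak, haj])⟩

/-- In an `(N,v,t)`-suitable core with `v ≤ t + 1`, if `k` starts a row exactly
`t + 1 - v` times and `j ≠ k`, then some row starts with `j` followed by `k`. -/
theorem suitableCore_exists_row_start_pair
    (N v t : ℕ) (hN : 0 < N) (hv : 0 < v) (ht : 0 < t) (hvt : v ≤ t + 1)
    (C : Fin N → Equiv.Perm (Fin v)) (hC : IsSuitableCore N v t C)
    (k j : Fin v) (hjk : j ≠ k)
    (hk : (Finset.univ.filter (fun i : Fin N => ((C i).symm k : ℕ) = 0)).card = t + 1 - v) :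
    ∃ i : Fin N, ((C i).symm j : ℕ) = 0 ∧ ((C i).symm k : ℕ) = 1 :=
  suitableCore_exists_row_start_pair_general N v t hvt C hC k j hjk hk
end

section
/- Let C be an (N,v,t)-suitable core with v ≤ t+2, let k ∈ [v] occur as the first symbol of a row of C exactly t+2−v times, and let i, j ∈ [v] be two distinct symbols, both different from k. If no row of C starts with the two symbols i,k (in that order) and no row starts with j,k (in that order), then there is at least one row of C that starts with the three symbols i,j,k or with j,i,k (in those orders). -/
open Finset

theorem Equiv.card_filter_apply_lt {α : Type*} [Fintype α] {n : ℕ} (e : α ≃ Fin n) (a : α) :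
    #{x | e x < e a} = e a := by
  have : ({x | e x < e a} : Finset α) = (Iio (e a)).map e.symm.toEmbedding := by
    ext x
    simp
  rw [this, card_map, Fin.card_Iio]

theorem Equiv.Perm.prefix_cases_of_forall_notMem_lt {v : ℕ} (σ : Equiv.Perm (Fin v)) {i j k : Fin v}
    (hik : i ≠ k) (hjk : j ≠ k) (hij : i ≠ j)
    (h : ∀ x ∉ ({i, j, k} : Finset (Fin v)), σ.symm k < σ.symm x) :
    (σ.symm k : ℕ) = 0 ∨
      ((σ.symm i : ℕ) = 0 ∧ (σ.symm k : ℕ) = 1) ∨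
      ((σ.symm j : ℕ) = 0 ∧ (σ.symm k : ℕ) = 1) ∨
      ((σ.symm i : ℕ) = 0 ∧ (σ.symm j : ℕ) = 1 ∧ (σ.symm k : ℕ) = 2) ∨
      ((σ.symm j : ℕ) = 0 ∧ (σ.symm i : ℕ) = 1 ∧ (σ.symm k : ℕ) = 2) := by
  have hpred : ({x | σ.symm x < σ.symm k} : Finset (Fin v)) =
      ({i, j} : Finset (Fin v)).filter (fun x => σ.symm x < σ.symm k) := by
    ext x
    simp only [mem_filter, mem_univ, true_and]
    refine ⟨fun hx => ⟨?_, hx⟩, And.right⟩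
    by_contra hxij
    have hxk : x ≠ k := by rintro rfl; exact lt_irrefl _ hx
    exact (h x (by simp_all)).asymm hx
  have hcount := σ.symm.card_filter_apply_lt k
  rw [hpred] at hcount
  have hne : (σ.symm i : ℕ) ≠ σ.symm j := by simpa [Fin.val_inj] using hij
  by_cases hi : σ.symm i < σ.symm k <;> by_cases hj : σ.symm j < σ.symm k <;>
    simp only [filter_insert, filter_singleton, hi, hj, if_true, if_false,
      card_insert_of_notMem, mem_singleton, hij, not_false_eq_true, card_singleton,
      card_empty, insert_empty_eq] at hcount <;>
    rw [Fin.lt_def] at hi hj <;> omega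

theorem IsSuitableCore.le_card_filter_forall_notMem_lt {N v t : ℕ} {C : Fin N → Equiv.Perm (Fin v)}
    (hC : IsSuitableCore N v t C) {σ : Fin v} {T : Finset (Fin v)} (hσ : σ ∈ T)
    (hT : v < t + #T) :
    t + #T - v ≤ #{r | ∀ τ ∉ T, ((C r).symm σ : ℕ) < (C r).symm τ} := by
  have hTv : #T ≤ v := by simpa using card_le_univ T
  have := hC (v - #T) (by omega) σ Tᶜ (by simpa) (by simp [card_compl])
  simp only [mem_compl] at this
  rwa [show t - (v - #T) = t + #T - v by omega] at this

theorem suitableCore_exists_row_start_triple_general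
    (N v t : ℕ) (hvt : v ≤ t + 2)
    (C : Fin N → Equiv.Perm (Fin v)) (hC : IsSuitableCore N v t C)
    (k i j : Fin v) (hik : i ≠ k) (hjk : j ≠ k) (hij : i ≠ j)
    (hk : (Finset.univ.filter (fun r : Fin N => ((C r).symm k : ℕ) = 0)).card = t + 2 - v)
    (hik' : ¬ ∃ r : Fin N, ((C r).symm i : ℕ) = 0 ∧ ((C r).symm k : ℕ) = 1)
    (hjk' : ¬ ∃ r : Fin N, ((C r).symm j : ℕ) = 0 ∧ ((C r).symm k : ℕ) = 1) :
    ∃ r : Fin N,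
      (((C r).symm i : ℕ) = 0 ∧ ((C r).symm j : ℕ) = 1 ∧ ((C r).symm k : ℕ) = 2) ∨
      (((C r).symm j : ℕ) = 0 ∧ ((C r).symm i : ℕ) = 1 ∧ ((C r).symm k : ℕ) = 2) := by
  by_contra! hno
  have hT : #{i, j, k} = 3 := card_eq_three.mpr ⟨i, j, k, hij, hik, hjk, rfl⟩
  have hv : 3 ≤ v := by simpa [hT] using card_le_univ ({i, j, k} : Finset (Fin v))
  have hmany := hC.le_card_filter_forall_notMem_lt (σ := k) (T := {i, j, k}) (by simp) (by omega)
  have hsub : ({r | ∀ τ ∉ ({i, j, k} : Finset (Fin v)), ((C r).symm k : ℕ) < (C r).symm τ} :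
      Finset (Fin N)) ⊆ ({r | ((C r).symm k : ℕ) = 0} : Finset (Fin N)) := by
    intro r hr
    rw [mem_filter] at hr ⊢
    refine ⟨mem_univ r, ?_⟩
    rcases (C r).prefix_cases_of_forall_notMem_lt hik hjk hij hr.2 with h | h | h | h | h
    · exact h
    · exact absurd ⟨r, h⟩ hik'
    · exact absurd ⟨r, h⟩ hjk'
    · exact absurd h.2.2 ((hno r).1 h.1 h.2.1)
    · exact absurd h.2.2 ((hno r).2 h.1 h.2.1)
  have := card_le_card hsub
  omega

/-- In an `(N,v,t)`-suitable core with `v ≤ t + 2`, if `k` starts a row exactly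
`t + 2 - v` times, `i, j, k` are pairwise distinct, and no row starts with
`i k` or with `j k`, then some row starts with `i j k` or with `j i k`. -/
theorem suitableCore_exists_row_start_triple
    (N v t : ℕ) (hN : 0 < N) (hv : 0 < v) (ht : 0 < t) (hvt : v ≤ t + 2)
    (C : Fin N → Equiv.Perm (Fin v)) (hC : IsSuitableCore N v t C)
    (k i j : Fin v) (hik : i ≠ k) (hjk : j ≠ k) (hij : i ≠ j)
    (hk : (Finset.univ.filter (fun r : Fin N => ((C r).symm k : ℕ) = 0)).card = t + 2 - v)
    (hik' : ¬ ∃ r : Fin N, ((C r).symm i : ℕ) = 0 ∧ ((C r).symm k : ℕ) = 1)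
    (hjk' : ¬ ∃ r : Fin N, ((C r).symm j : ℕ) = 0 ∧ ((C r).symm k : ℕ) = 1) :
    ∃ r : Fin N,
      (((C r).symm i : ℕ) = 0 ∧ ((C r).symm j : ℕ) = 1 ∧ ((C r).symm k : ℕ) = 2) ∨
      (((C r).symm j : ℕ) = 0 ∧ ((C r).symm i : ℕ) = 1 ∧ ((C r).symm k : ℕ) = 2) :=
  suitableCore_exists_row_start_triple_general N v t hvt C hC k i j hik hjk hij hk hik' hjk'
end

section
/- Suppose there exists an (N,v,t)-suitable core with N > v(t+1−v). Then there exists an (N+v−1, v, t+1)-suitable core. (Equivalently, if SCN(t,N) ≥ v and N > v(t+1−v), then SCN(t+1, N+v−1) ≥ v, where SCN(t,N) denotes the largest v for which an (N,v,t)-suitable core exists.) -/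
/-- There is a permutation of `Fin v` putting `y` in position `0` and `x` in
position `1`. -/
lemma aux_perm (v : ℕ) (hv : 1 < v) (x y : Fin v) (hxy : x ≠ y) :
    ∃ Q : Equiv.Perm (Fin v), (Q.symm y : ℕ) = 0 ∧ (Q.symm x : ℕ) = 1 := by
  have h0 : 0 < v := by omega
  set z0 : Fin v := ⟨0, h0⟩ with hz0
  set z1 : Fin v := ⟨1, hv⟩ with hz1
  have h01 : z0 ≠ z1 := by simp [hz0, hz1, Fin.ext_iff]
  set g := Equiv.swap z0 y with hg
  have hp0 : g.symm x ≠ z0 := by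
    intro h
    have hx : x = g z0 := by rw [← h, Equiv.apply_symm_apply]
    rw [hg, Equiv.swap_apply_left] at hx
    exact hxy hx
  refine ⟨g * Equiv.swap z1 (g.symm x), ?_, ?_⟩
  · have hQ : (g * Equiv.swap z1 (g.symm x)) z0 = y := by
      rw [Equiv.Perm.mul_apply, Equiv.swap_apply_of_ne_of_ne h01 (Ne.symm hp0), hg,
        Equiv.swap_apply_left]
    have h2 : (g * Equiv.swap z1 (g.symm x)).symm y = z0 := by
      rw [← hQ, Equiv.symm_apply_apply]
    rw [h2]
  · have hQ : (g * Equiv.swap z1 (g.symm x)) z1 = x := by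
      rw [Equiv.Perm.mul_apply, Equiv.swap_apply_left, Equiv.apply_symm_apply]
    have h2 : (g * Equiv.swap z1 (g.symm x)).symm x = z1 :=
      (Equiv.symm_apply_eq _).mpr hQ.symm
    rw [h2]

/-- The extended array: the first `N` rows are `C`, the remaining `v-1` rows
are given by `Q z` for the `v-1` symbols `z ≠ x`. -/
def buildD (N v : ℕ) (C : Fin N → Equiv.Perm (Fin v)) (Q : Fin v → Equiv.Perm (Fin v))
    (x : Fin v) : Fin (N + v - 1) → Equiv.Perm (Fin v) := fun i =>
  if h : (i : ℕ) < N then C ⟨(i : ℕ), h⟩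
  else Q ⟨if (i : ℕ) - N < (x : ℕ) then (i : ℕ) - N else (i : ℕ) - N + 1, by
    have h1 := i.2
    have h2 := x.2
    split <;> omega⟩

lemma buildD_lt (N v : ℕ) (C : Fin N → Equiv.Perm (Fin v)) (Q : Fin v → Equiv.Perm (Fin v))
    (x : Fin v) (i : Fin (N + v - 1)) (h : (i : ℕ) < N) :
    buildD N v C Q x i = C ⟨(i : ℕ), h⟩ := dif_pos h

lemma buildD_new (N v : ℕ) (C : Fin N → Equiv.Perm (Fin v)) (Q : Fin v → Equiv.Perm (Fin v))
    (x z : Fin v) (hzx : (z : ℕ) ≠ (x : ℕ)) :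
    ∃ i : Fin (N + v - 1), N ≤ (i : ℕ) ∧ buildD N v C Q x i = Q z := by
  have hz := z.2
  have hx := x.2
  refine ⟨⟨N + (if (z : ℕ) < (x : ℕ) then (z : ℕ) else (z : ℕ) - 1), by split <;> omega⟩,
    Nat.le_add_right _ _, ?_⟩
  simp only [buildD]
  rw [dif_neg (Nat.not_lt.mpr (Nat.le_add_right _ _))]
  congr 1
  apply Fin.ext
  simp only [Nat.add_sub_cancel_left]
  split_ifs <;> omega

/-- If an `(N,v,t)`-suitable core exists with `N > v(t+1-v)`, then an
`(N+v-1, v, t+1)`-suitable core exists. -/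
theorem exists_suitableCore_succ_t
    (N v t : ℕ) (hN : 0 < N) (hv : 0 < v) (ht : 0 < t)
    (hNvt : (v : ℤ) * ((t : ℤ) + 1 - v) < (N : ℤ))
    (hC : ∃ C : Fin N → Equiv.Perm (Fin v), IsSuitableCore N v t C) :
    ∃ D : Fin (N + v - 1) → Equiv.Perm (Fin v),
      IsSuitableCore (N + v - 1) v (t + 1) D := by
  classical
  obtain ⟨C, hC⟩ := hC
  -- Pigeonhole: a symbol `x` appearing in position 0 in at least `N/v` rows.
  have hsum : ∑ z : Fin v, (Finset.univ.filter (fun i : Fin N => C i ⟨0, hv⟩ = z)).card = N := by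
    have h := Finset.card_eq_sum_card_fiberwise
      (f := fun i : Fin N => C i ⟨0, hv⟩) (s := Finset.univ) (t := Finset.univ)
      (fun y _ => Finset.mem_univ _)
    simpa using h.symm
  have hx : ∃ x : Fin v, (N : ℤ) ≤ (v : ℤ) *
      ((Finset.univ.filter (fun i : Fin N => C i ⟨0, hv⟩ = x)).card : ℤ) := by
    by_contra hcon
    push_neg at hcon
    have h1 : (v : ℤ) * (N : ℤ) = ∑ z : Fin v,
        (v : ℤ) * ((Finset.univ.filter (fun i : Fin N => C i ⟨0, hv⟩ = z)).card : ℤ) := by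
      rw [← Finset.mul_sum]
      congr 1
      exact_mod_cast hsum.symm
    have h2 : ∑ z : Fin v,
        (v : ℤ) * ((Finset.univ.filter (fun i : Fin N => C i ⟨0, hv⟩ = z)).card : ℤ)
        ≤ ∑ _z : Fin v, ((N : ℤ) - 1) :=
      Finset.sum_le_sum (fun z _ => by have := hcon z; omega)
    rw [Finset.sum_const, Finset.card_univ, Fintype.card_fin, nsmul_eq_mul] at h2
    have hv' : (0 : ℤ) < v := by exact_mod_cast hv
    nlinarith [h1, h2]
  obtain ⟨x, hxN⟩ := hx
  set M : Finset (Fin N) := Finset.univ.filter (fun i : Fin N => C i ⟨0, hv⟩ = x) with hM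
  have hv' : (0 : ℤ) < v := by exact_mod_cast hv
  have hmZ : (t : ℤ) + 1 - v < (M.card : ℤ) :=
    lt_of_mul_lt_mul_left (lt_of_lt_of_le hNvt hxN) (le_of_lt hv')
  have hmnat : t + 2 ≤ M.card + v := by omega
  -- The new rows: for each `z ≠ x` a permutation with `z` first and `x` second.
  have hQex : ∀ z : Fin v, ∃ q : Equiv.Perm (Fin v), (z : ℕ) ≠ (x : ℕ) → 1 < v →
      ((q.symm z : ℕ) = 0 ∧ (q.symm x : ℕ) = 1) := by
    intro z
    by_cases h1 : (z : ℕ) ≠ (x : ℕ)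
    · by_cases h2 : 1 < v
      · obtain ⟨q, hq⟩ := aux_perm v h2 x z (fun he => h1 (congrArg Fin.val he.symm))
        exact ⟨q, fun _ _ => hq⟩
      · exact ⟨1, fun _ h => absurd h h2⟩
    · exact ⟨1, fun h _ => absurd h h1⟩
  choose Q hQ using hQex
  refine ⟨buildD N v C Q x, ?_⟩
  intro s hs σ S hσS hScard
  have hNle : ∀ i : Fin N, (i : ℕ) < N + v - 1 := fun i => by have := i.2; omega
  -- counting helpers
  have key : ∀ G : Finset (Fin N),
      (∀ i ∈ G, ∀ τ ∈ S, ((C i).symm σ : ℕ) < ((C i).symm τ : ℕ)) →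
      G.card ≤ (Finset.univ.filter (fun i : Fin (N + v - 1) => ∀ τ ∈ S,
        ((buildD N v C Q x i).symm σ : ℕ) < ((buildD N v C Q x i).symm τ : ℕ))).card := by
    intro G hG
    apply Finset.card_le_card_of_injOn (fun i : Fin N => (⟨(i : ℕ), hNle i⟩ : Fin (N + v - 1)))
    · intro i hi
      refine Finset.mem_filter.mpr ⟨Finset.mem_univ _, ?_⟩
      intro τ hτ
      rw [buildD_lt N v C Q x _ i.2]
      exact hG i hi τ hτ
    · intro a _ b _ h
      have h2 := congrArg Fin.val h
      exact Fin.ext h2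
  have key2 : ∀ (G : Finset (Fin N)) (i₀ : Fin (N + v - 1)), N ≤ (i₀ : ℕ) →
      (∀ i ∈ G, ∀ τ ∈ S, ((C i).symm σ : ℕ) < ((C i).symm τ : ℕ)) →
      (∀ τ ∈ S, ((buildD N v C Q x i₀).symm σ : ℕ) < ((buildD N v C Q x i₀).symm τ : ℕ)) →
      G.card + 1 ≤ (Finset.univ.filter (fun i : Fin (N + v - 1) => ∀ τ ∈ S,
        ((buildD N v C Q x i).symm σ : ℕ) < ((buildD N v C Q x i).symm τ : ℕ))).card := by
    intro G i₀ hi₀ hG hp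
    have hinj : Function.Injective (fun i : Fin N => (⟨(i : ℕ), hNle i⟩ : Fin (N + v - 1))) := by
      intro a b h
      have h2 := congrArg Fin.val h
      exact Fin.ext h2
    have hnot : i₀ ∉ G.image (fun i : Fin N => (⟨(i : ℕ), hNle i⟩ : Fin (N + v - 1))) := by
      rw [Finset.mem_image]
      rintro ⟨a, -, ha⟩
      have h1 := congrArg Fin.val ha
      have h2 := a.2
      simp only at h1
      omega
    have hsub : insert i₀ (G.image (fun i : Fin N => (⟨(i : ℕ), hNle i⟩ : Fin (N + v - 1))))
        ⊆ Finset.univ.filter (fun i : Fin (N + v - 1) => ∀ τ ∈ S,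
        ((buildD N v C Q x i).symm σ : ℕ) < ((buildD N v C Q x i).symm τ : ℕ)) := by
      intro j hj
      rcases Finset.mem_insert.mp hj with h | h
      · subst h
        exact Finset.mem_filter.mpr ⟨Finset.mem_univ _, hp⟩
      · rw [Finset.mem_image] at h
        obtain ⟨a, ha, rfl⟩ := h
        refine Finset.mem_filter.mpr ⟨Finset.mem_univ _, ?_⟩
        intro τ hτ
        rw [buildD_lt N v C Q x _ a.2]
        exact hG a ha τ hτ
    have hcard := Finset.card_le_card hsub
    rw [Finset.card_insert_of_notMem hnot, Finset.card_image_of_injective _ hinj] at hcard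
    omega
  -- the filter over the original core
  set FC : Finset (Fin N) := Finset.univ.filter
    (fun i : Fin N => ∀ τ ∈ S, ((C i).symm σ : ℕ) < ((C i).symm τ : ℕ)) with hFCdef
  have hFCmem : ∀ i ∈ FC, ∀ τ ∈ S, ((C i).symm σ : ℕ) < ((C i).symm τ : ℕ) :=
    fun i hi => (Finset.mem_filter.mp hi).2
  have hFC : t - s ≤ FC.card := by
    rcases Nat.lt_or_ge s t with h | h
    · exact hC s h σ S hσS hScard
    · omega
  by_cases hσx : σ = x
  · rcases le_or_gt (s + 2) v with hsv | hsv
    · -- there is a symbol `y ∉ S ∪ {x}`; the new row headed by `y` works for `x`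
      obtain ⟨y, hy⟩ : ∃ y : Fin v, y ∉ insert σ S := by
        by_contra hcon
        push_neg at hcon
        have h1 : (Finset.univ : Finset (Fin v)) ⊆ insert σ S := fun y _ => hcon y
        have h2 := Finset.card_le_card h1
        rw [Finset.card_univ, Fintype.card_fin] at h2
        have h3 := Finset.card_insert_le σ S
        omega
      have hyS : y ∉ S := fun h => hy (Finset.mem_insert_of_mem h)
      have hyσ : y ≠ σ := fun h => hy (by rw [h]; exact Finset.mem_insert_self σ S)
      have hyx : (y : ℕ) ≠ (x : ℕ) := fun h => hyσ (by rw [hσx]; exact Fin.ext h)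
      have hv2 : 1 < v := by omega
      obtain ⟨i₀, hi₀N, hi₀D⟩ := buildD_new N v C Q x y hyx
      obtain ⟨hq0, hq1⟩ := hQ y hyx hv2
      have hpred : ∀ τ ∈ S,
          ((buildD N v C Q x i₀).symm σ : ℕ) < ((buildD N v C Q x i₀).symm τ : ℕ) := by
        intro τ hτ
        rw [hi₀D, hσx, hq1]
        have hτx : τ ≠ x := by
          intro h
          apply hσS
          rw [hσx, ← h]
          exact hτ
        have hτy : τ ≠ y := fun h => hyS (h ▸ hτ)
        have hne0 : ((Q y).symm τ : ℕ) ≠ 0 := by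
          intro h
          exact hτy ((Q y).symm.injective (Fin.ext (by rw [h, hq0])))
        have hne1 : ((Q y).symm τ : ℕ) ≠ 1 := by
          intro h
          exact hτx ((Q y).symm.injective (Fin.ext (by rw [h, hq1])))
        omega
      have h2 := key2 FC i₀ hi₀N hFCmem hpred
      omega
    · -- `S` is (essentially) everything else: use the rows of `C` where `x` is first
      have hMmem : ∀ i ∈ M, ∀ τ ∈ S, ((C i).symm σ : ℕ) < ((C i).symm τ : ℕ) := by
        intro i hi τ hτ
        have hi' : C i ⟨0, hv⟩ = x := (Finset.mem_filter.mp hi).2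
        have hs0 : (C i).symm x = ⟨0, hv⟩ := by rw [← hi', Equiv.symm_apply_apply]
        rw [hσx, hs0]
        have hτx : τ ≠ x := by
          intro h
          apply hσS
          rw [hσx, ← h]
          exact hτ
        have hne0 : ((C i).symm τ : ℕ) ≠ 0 := by
          intro h
          apply hτx
          apply (C i).symm.injective
          rw [hs0]
          exact Fin.ext h
        exact Nat.pos_of_ne_zero hne0
      have h2 := key M hMmem
      omega
  · -- `σ ≠ x`: the new row headed by `σ` works
    have hσx' : (σ : ℕ) ≠ (x : ℕ) := fun h => hσx (Fin.ext h)
    have hv2 : 1 < v := by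
      have h1 := σ.2
      have h2 := x.2
      omega
    obtain ⟨i₀, hi₀N, hi₀D⟩ := buildD_new N v C Q x σ hσx'
    obtain ⟨hq0, hq1⟩ := hQ σ hσx' hv2
    have hpred : ∀ τ ∈ S,
        ((buildD N v C Q x i₀).symm σ : ℕ) < ((buildD N v C Q x i₀).symm τ : ℕ) := by
      intro τ hτ
      rw [hi₀D, hq0]
      have hτσ : τ ≠ σ := fun h => hσS (h ▸ hτ)
      have hne0 : ((Q σ).symm τ : ℕ) ≠ 0 := by
        intro h
        exact hτσ ((Q σ).symm.injective (Fin.ext (by rw [h, hq0])))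
      omega
    have h2 := key2 FC i₀ hi₀N hFCmem hpred
    omega
end

section
/- Let s ≥ 2 be an integer. If there exists an (s(s+1), s+2, 2s)-suitable core, then there exists an ((s+1)², s+2, 2s+1)-suitable core. -/
open Finset Equiv

section Rows

variable {v : ℕ}

def precedeCount {ι : Type*} [Fintype ι] (C : ι → Perm (Fin v)) (σ : Fin v)
    (S : Finset (Fin v)) : ℕ :=
  #{i | ∀ τ ∈ S, (C i).symm σ < (C i).symm τ}

theorem isSuitableCore_iff_precedeCount {N t : ℕ} {C : Fin N → Perm (Fin v)} :
    IsSuitableCore N v t C ↔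
      ∀ σ S, σ ∉ S → #S < t → t - #S ≤ precedeCount C σ S := by
  constructor
  · intro h σ S hσS hSt
    exact h _ hSt σ S hσS rfl
  · rintro h _ hSt σ S hσS rfl
    exact h σ S hσS hSt

theorem precedeCount_append {m n : ℕ} (C : Fin m → Perm (Fin v)) (R : Fin n → Perm (Fin v))
    (σ : Fin v) (S : Finset (Fin v)) :
    precedeCount (Fin.append C R) σ S = precedeCount C σ S + precedeCount R σ S := by
  simp only [precedeCount, card_filter, Fin.sum_univ_add, Fin.append_left, Fin.append_right]

theorem symm_lt_symm_of_apply_zero_eq [NeZero v] {p : Perm (Fin v)} {σ τ : Fin v}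
    (hσ : p 0 = σ) (hτ : τ ≠ σ) : p.symm σ < p.symm τ := by
  rw [← hσ, symm_apply_apply, Fin.pos_iff_ne_zero, Ne, symm_apply_eq, hσ]
  exact hτ

theorem symm_lt_symm_of_apply_one_eq {n : ℕ} {p : Perm (Fin (n + 2))} {a σ τ : Fin (n + 2)}
    (ha : p 0 = a) (hσ : p 1 = σ) (hτa : τ ≠ a) (hτσ : τ ≠ σ) : p.symm σ < p.symm τ := by
  have h0 : p.symm τ ≠ 0 := by rwa [Ne, symm_apply_eq, ha]
  have h1 : p.symm τ ≠ 1 := by rwa [Ne, symm_apply_eq, hσ]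
  rw [← hσ, symm_apply_apply, Fin.lt_def]
  rw [Ne, Fin.ext_iff] at h0 h1
  simp only [Fin.val_zero, Fin.val_one] at h0 h1 ⊢
  omega

theorem card_filter_apply_zero_le_precedeCount [NeZero v] {ι : Type*} [Fintype ι]
    (C : ι → Perm (Fin v)) {σ : Fin v} {S : Finset (Fin v)} (hσS : σ ∉ S) :
    #{i | C i 0 = σ} ≤ precedeCount C σ S :=
  card_le_card <| monotone_filter_right _ fun _ _ hi _ hτ =>
    symm_lt_symm_of_apply_zero_eq hi (ne_of_mem_of_not_mem hτ hσS)

end Rows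

section FrontRow

variable {n : ℕ}

-- The second swap moves `b`, wherever the first one put it, to position `1`.
def frontRow (a b : Fin (n + 2)) : Perm (Fin (n + 2)) :=
  swap 0 a * swap 1 (swap 0 a b)

theorem frontRow_apply_zero {a b : Fin (n + 2)} (hab : a ≠ b) : frontRow a b 0 = a := by
  have hb : swap 0 a b ≠ 0 := by
    rw [Ne, swap_apply_eq_iff, swap_apply_left]
    exact hab.symm
  rw [frontRow, Perm.mul_apply, swap_apply_of_ne_of_ne zero_ne_one hb.symm, swap_apply_left]

theorem frontRow_apply_one (a b : Fin (n + 2)) : frontRow a b 1 = b := by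
  rw [frontRow, Perm.mul_apply, swap_apply_left, swap_apply_self]

variable {σ₀ : Fin (n + 2)} {S : Finset (Fin (n + 2))}

theorem sub_card_le_precedeCount_frontRow_self (hσ₀ : σ₀ ∉ S) :
    n + 1 - #S ≤ precedeCount (fun j => frontRow (σ₀.succAbove j) σ₀) σ₀ S := by
  have hfirst : #{j | σ₀.succAbove j ∈ S} ≤ #S :=
    card_le_card_of_injOn _ (fun j hj => (mem_filter.1 hj).2)
      (Fin.succAbove_right_injective.injOn)
  have hrest : #{j | σ₀.succAbove j ∉ S} ≤
      precedeCount (fun j => frontRow (σ₀.succAbove j) σ₀) σ₀ S :=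
    card_le_card <| monotone_filter_right _ fun j _ hj τ hτ =>
      symm_lt_symm_of_apply_one_eq (frontRow_apply_zero (Fin.succAbove_ne σ₀ j))
        (frontRow_apply_one _ _) (ne_of_mem_of_not_mem hτ hj) (ne_of_mem_of_not_mem hτ hσ₀)
  have htotal := card_filter_add_card_filter_not (s := univ) fun j => σ₀.succAbove j ∈ S
  rw [card_univ, Fintype.card_fin] at htotal
  omega

theorem one_le_precedeCount_frontRow {σ : Fin (n + 2)} (hσ : σ ≠ σ₀) (hσS : σ ∉ S) :
    1 ≤ precedeCount (fun j => frontRow (σ₀.succAbove j) σ₀) σ S := by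
  obtain ⟨j, rfl⟩ := Fin.exists_succAbove_eq hσ
  refine card_pos.2 ⟨j, mem_filter.2 ⟨mem_univ j, fun τ hτ => ?_⟩⟩
  exact symm_lt_symm_of_apply_zero_eq (frontRow_apply_zero (Fin.succAbove_ne σ₀ j))
    (ne_of_mem_of_not_mem hτ hσS)

end FrontRow

/-- For `s ≥ 2`, the existence of an `(s(s+1), s+2, 2s)`-suitable core implies
the existence of an `((s+1)², s+2, 2s+1)`-suitable core. -/
theorem exists_suitableCore_odd_of_even
    (s : ℕ) (hs : 2 ≤ s)
    (hC : ∃ C : Fin (s * (s + 1)) → Equiv.Perm (Fin (s + 2)),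
      IsSuitableCore (s * (s + 1)) (s + 2) (2 * s) C) :
    ∃ D : Fin ((s + 1) ^ 2) → Equiv.Perm (Fin (s + 2)),
      IsSuitableCore ((s + 1) ^ 2) (s + 2) (2 * s + 1) D := by
  obtain ⟨C, hC⟩ := hC
  obtain ⟨σ₀, hσ₀⟩ : ∃ σ₀, s - 1 < #{i | C i 0 = σ₀} :=
    Fintype.exists_lt_card_fiber_of_mul_lt_card _ <| by
      obtain ⟨u, rfl⟩ : ∃ u, s = u + 1 := ⟨s - 1, by omega⟩
      simp only [Fintype.card_fin, Nat.add_sub_cancel]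
      nlinarith
  rw [show (s + 1) ^ 2 = s * (s + 1) + (s + 1) by ring]
  refine ⟨Fin.append C fun j => frontRow (σ₀.succAbove j) σ₀,
    isSuitableCore_iff_precedeCount.2 fun σ S hσS _ => ?_⟩
  have hS : #S < s + 2 := by simpa using card_lt_univ_of_notMem hσS
  rw [precedeCount_append]
  by_cases hσ : σ = σ₀
  · subst hσ
    have hold := card_filter_apply_zero_le_precedeCount C hσS
    have hnew := sub_card_le_precedeCount_frontRow_self (n := s) hσS
    omega
  · have hold := isSuitableCore_iff_precedeCount.1 hC σ S hσS (by omega)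
    have hnew := one_le_precedeCount_frontRow hσ hσS
    omega
end

section
/- Let e and m be positive integers and let d be an integer with d ≥ (e−1)(2m+1)+1. Let A be a finite set of size d and let g be a function from A to subsets of A such that |g(a)| ≤ m for all a ∈ A. Then there exists a subset B of A of size e such that j ∉ g(i) for all distinct i, j ∈ B. -/
/-!
Greedy selection. Counting the pairs `(j, a)` of `A` with `a ∈ g j` shows that some `a ∈ A`
lies in at most `m` of the sets `g j`. Keep `a`, discard `a`, `g a` and those `j` (at most
`2m + 1` elements in all), and recurse on what is left: every `2m + 1` elements of `A` pay for
one element of `B`.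
-/

open Finset

namespace Finset

variable {α : Type*} [DecidableEq α] {m : ℕ} {A : Finset α} {g : α → Finset α}

theorem exists_card_filter_mem_le (hA : A.Nonempty) (hg : ∀ a ∈ A, #(g a) ≤ m) :
    ∃ a ∈ A, #{j ∈ A | a ∈ g j} ≤ m := by
  refine exists_le_of_sum_le hA ?_
  calc ∑ a ∈ A, #{j ∈ A | a ∈ g j}
      = ∑ j ∈ A, #{a ∈ A | a ∈ g j} :=
        (sum_card_bipartiteAbove_eq_sum_card_bipartiteBelow (r := fun j a => a ∈ g j)).symm
    _ ≤ ∑ _j ∈ A, m :=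
        sum_le_sum fun j hj => (card_le_card fun _ ha => (mem_filter.1 ha).2).trans (hg j hj)

theorem exists_pairwise_notMem_of_mul_lt_card (hg : ∀ a ∈ A, #(g a) ≤ m) (e : ℕ)
    (hA : e * (2 * m + 1) < #A) :
    ∃ B ⊆ A, #B = e + 1 ∧ (B : Set α).Pairwise fun i j => j ∉ g i := by
  induction e generalizing A with
  | zero =>
    obtain ⟨a, ha⟩ := card_pos.1 (by omega : 0 < #A)
    exact ⟨{a}, singleton_subset_iff.2 ha, card_singleton a, by simp⟩
  | succ e ih =>
    obtain ⟨a, haA, ha⟩ := exists_card_filter_mem_le (card_pos.1 (by omega)) hg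
    set bad := insert a (g a ∪ {j ∈ A | a ∈ g j})
    have hbad : #bad ≤ 2 * m + 1 :=
      calc #bad ≤ #(g a ∪ {j ∈ A | a ∈ g j}) + 1 := card_insert_le _ _
        _ ≤ #(g a) + #{j ∈ A | a ∈ g j} + 1 := by grw [card_union_le]
        _ ≤ 2 * m + 1 := by grw [hg a haA, ha]; omega
    have hA' : e * (2 * m + 1) < #(A \ bad) := by
      have := le_card_sdiff bad A
      rw [add_mul] at hA
      omega
    obtain ⟨B, hBA', hB, hBp⟩ := ih (fun x hx => hg x (sdiff_subset hx)) hA'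
    have hB_mem (b) (hb : b ∈ B) : b ≠ a ∧ b ∉ g a ∧ a ∉ g b := by
      have := mem_sdiff.1 (hBA' hb)
      simp_all [bad]
    refine ⟨insert a B, insert_subset haA (hBA'.trans sdiff_subset), ?_, ?_⟩
    · rw [card_insert_of_notMem fun h => (hB_mem a h).1 rfl, hB]
    · rw [coe_insert, Set.pairwise_insert]
      exact ⟨hBp, fun b hb _ => (hB_mem b hb).2⟩

end Finset

theorem exists_subset_avoiding_general {α : Type*}
    (e m d : ℕ) (hd : (e - 1) * (2 * m + 1) + 1 ≤ d)
    (A : Finset α) (hA : A.card = d)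
    (g : α → Finset α) (hg₂ : ∀ a ∈ A, (g a).card ≤ m) :
    ∃ B ⊆ A, B.card = e ∧ ∀ i ∈ B, ∀ j ∈ B, i ≠ j → j ∉ g i := by
  classical
  rcases e with _ | e
  · exact ⟨∅, empty_subset A, card_empty, by simp⟩
  · obtain ⟨B, hBA, hB, hBp⟩ := exists_pairwise_notMem_of_mul_lt_card hg₂ e (by rw [Nat.add_sub_cancel] at hd; omega)
    exact ⟨B, hBA, hB, fun i hi j hj => hBp hi hj⟩

/-- If `d ≥ (e-1)(2m+1)+1` and each element of a finite set `A` of size `d` is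
associated with a subset of `A` of size at most `m`, then there are `e`
elements of `A`, each of which belongs to none of the subsets associated with
the other `e - 1` elements. -/
theorem exists_subset_avoiding {α : Type*} [DecidableEq α]
    (e m d : ℕ) (he : 0 < e) (hm : 0 < m) (hd : (e - 1) * (2 * m + 1) + 1 ≤ d)
    (A : Finset α) (hA : A.card = d)
    (g : α → Finset α) (hg₁ : ∀ a ∈ A, g a ⊆ A) (hg₂ : ∀ a ∈ A, (g a).card ≤ m) :
    ∃ B ⊆ A, B.card = e ∧ ∀ i ∈ B, ∀ j ∈ B, i ≠ j → j ∉ g i :=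
  exists_subset_avoiding_general e m d hd A hA g hg₂
end

section
/- Let s ≥ 1 be an integer and let C be an ((s+1)², s+1, 2s+1)-suitable core. Then each symbol of [s+1] occurs as the first (leftmost) symbol of a row of C exactly s+1 times. -/
open Finset

def rowsStartingWith {ι : Type*} [Fintype ι] {v : ℕ} (C : ι → Equiv.Perm (Fin v))
    (σ : Fin v) : Finset ι :=
  univ.filter fun i => ((C i).symm σ : ℕ) = 0

theorem Equiv.Perm.forall_symm_lt_iff_symm_eq_zero {v : ℕ} (e : Equiv.Perm (Fin (v + 1)))
    (k : Fin (v + 1)) :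
    (∀ τ ∈ univ.erase k, (e.symm k : ℕ) < e.symm τ) ↔ (e.symm k : ℕ) = 0 := by
  constructor
  · intro h
    by_contra hk
    have hne : e 0 ≠ k := by
      rintro rfl
      simp at hk
    simpa using h (e 0) (mem_erase.2 ⟨hne, mem_univ _⟩)
  · intro hk τ hτ
    have hne : (e.symm τ : ℕ) ≠ e.symm k :=
      fun h => (mem_erase.1 hτ).1 (e.symm.injective (Fin.ext h))
    omega

theorem sum_card_rowsStartingWith {ι : Type*} [Fintype ι] {v : ℕ} [NeZero v]
    (C : ι → Equiv.Perm (Fin v)) :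
    ∑ σ, #(rowsStartingWith C σ) = Fintype.card ι := by
  rw [← card_univ, card_eq_sum_card_fiberwise (f := fun i => C i 0) (t := univ)
    (fun _ _ => mem_univ _)]
  refine sum_congr rfl fun σ _ => congrArg card (filter_congr fun i _ => ?_)
  rw [Fin.val_eq_zero_iff, Equiv.symm_apply_eq, eq_comm]

theorem IsSuitableCore.le_card_rowsStartingWith {N v t : ℕ}
    {C : Fin N → Equiv.Perm (Fin (v + 1))} (hC : IsSuitableCore N (v + 1) t C) (hvt : v < t)
    (σ : Fin (v + 1)) : t - v ≤ #(rowsStartingWith C σ) := by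
  have h := hC v hvt σ (univ.erase σ) (notMem_erase _ _) (by simp)
  simp only [Equiv.Perm.forall_symm_lt_iff_symm_eq_zero] at h
  exact h

theorem suitableCore_equidistribution_general
    (s : ℕ)
    (C : Fin ((s + 1) ^ 2) → Equiv.Perm (Fin (s + 1)))
    (hC : IsSuitableCore ((s + 1) ^ 2) (s + 1) (2 * s + 1) C)
    (k : Fin (s + 1)) :
    (Finset.univ.filter
      (fun i : Fin ((s + 1) ^ 2) => ((C i).symm k : ℕ) = 0)).card = s + 1 := by
  have hle : ∀ σ ∈ univ, s + 1 ≤ #(rowsStartingWith C σ) := fun σ _ => by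
    have := hC.le_card_rowsStartingWith (by omega : s < 2 * s + 1) σ
    omega
  have hsum : ∑ _σ : Fin (s + 1), (s + 1) = ∑ σ, #(rowsStartingWith C σ) := by
    rw [sum_card_rowsStartingWith]
    simp [sq]
  exact ((sum_eq_sum_iff_of_le hle).1 hsum k (mem_univ _)).symm

/-- In an `((s+1)², s+1, 2s+1)`-suitable core, each symbol starts a row
exactly `s + 1` times. -/
theorem suitableCore_equidistribution
    (s : ℕ) (hs : 1 ≤ s)
    (C : Fin ((s + 1) ^ 2) → Equiv.Perm (Fin (s + 1)))
    (hC : IsSuitableCore ((s + 1) ^ 2) (s + 1) (2 * s + 1) C)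
    (k : Fin (s + 1)) :
    (Finset.univ.filter
      (fun i : Fin ((s + 1) ^ 2) => ((C i).symm k : ℕ) = 0)).card = s + 1 :=
  suitableCore_equidistribution_general s C hC k
end

section
/- There exists a (9,5,5)-suitable core; in particular, the 9×5 array with rows (1,2,3,5,4), (2,1,4,5,3), (3,1,4,5,2), (3,2,4,5,1), (4,1,3,5,2), (4,2,3,5,1), (5,1,4,2,3), (5,2,4,1,3), (5,3,4,1,2) is a (9,5,5)-suitable core. Consequently SCN(5,9) ≥ 5. -/
def coreFun : Fin 9 → Fin 5 → Fin 5 :=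
  ![![0, 1, 2, 4, 3],
    ![1, 0, 3, 4, 2],
    ![2, 0, 3, 4, 1],
    ![2, 1, 3, 4, 0],
    ![3, 0, 2, 4, 1],
    ![3, 1, 2, 4, 0],
    ![4, 0, 3, 1, 2],
    ![4, 1, 3, 0, 2],
    ![4, 2, 3, 0, 1]]

def coreInv : Fin 9 → Fin 5 → Fin 5 :=
  ![![0, 1, 2, 4, 3],
    ![1, 0, 4, 2, 3],
    ![1, 4, 0, 2, 3],
    ![4, 1, 0, 2, 3],
    ![1, 4, 2, 0, 3],
    ![4, 1, 2, 0, 3],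
    ![1, 3, 4, 2, 0],
    ![3, 1, 4, 2, 0],
    ![3, 4, 1, 2, 0]]

lemma core_left : ∀ i, Function.LeftInverse (coreInv i) (coreFun i) := by decide
lemma core_right : ∀ i, Function.RightInverse (coreInv i) (coreFun i) := by decide

def corePerm : Fin 9 → Equiv.Perm (Fin 5) := fun i =>
  ⟨coreFun i, coreInv i, core_left i, core_right i⟩

/-- There exists a `(9,5,5)`-suitable core; in particular the explicit `9 × 5`
array with rows `(1,2,3,5,4)`, `(2,1,4,5,3)`, `(3,1,4,5,2)`, `(3,2,4,5,1)`,
`(4,1,3,5,2)`, `(4,2,3,5,1)`, `(5,1,4,2,3)`, `(5,2,4,1,3)`, `(5,3,4,1,2)`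
(symbols `1,…,5` modelled as `Fin 5`, symbol `k` corresponding to
`k - 1 : Fin 5`) is one.  Consequently `SCN(5,9) ≥ 5`. -/
theorem exists_suitableCore_9_5_5 :
    ∃ C : Fin 9 → Equiv.Perm (Fin 5),
      (∀ (i : Fin 9) (j : Fin 5), ((C i j : ℕ) + 1 =
        ![![1, 2, 3, 5, 4],
          ![2, 1, 4, 5, 3],
          ![3, 1, 4, 5, 2],
          ![3, 2, 4, 5, 1],
          ![4, 1, 3, 5, 2],
          ![4, 2, 3, 5, 1],
          ![5, 1, 4, 2, 3],
          ![5, 2, 4, 1, 3],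
          ![5, 3, 4, 1, 2]] i j)) ∧
      IsSuitableCore 9 5 5 C := by
  refine ⟨corePerm, by decide, ?_⟩
  intro s hs σ S hσ hc
  subst hc
  revert σ S
  decide
end
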